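/- Let v1 be a primitive word, v2 a nonempty proper prefix of v1, and e1, e2 integers with 1 ≤ e2 ≤ e1. Then U = v1^{e1} v2 v1^{e2} is primitive. -/

import Mathlib

/-!
Write `W = v₁ ^ (e₂ + e₁) v₂`. If `U = z ^ e` with `e ≥ 2`, then `W` is a factor of
`U U = z ^ (2e)`, so it has period `|z|`, and `|W| = |U| = e |z|`. As `v₂` is a prefix of `v₁`, `W`
is a prefix of `v₁ ^ (e₂ + e₁ + 1)` and has period `|v₁|` too. Both periods are at most `|W| / 2`,
so by the Fine–Wilf theorem `W`, and hence its prefix `v₁`, has period `gcd |v₁| |z|`. A word with a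
period `d ∣ |w|` is the power `(w.take d) ^ (|w| / d)`, so primitivity of `v₁` forces
`gcd |v₁| |z| = |v₁|`. Then `|v₁|` divides `e |z| = (e₂ + e₁) |v₁| + |v₂|`, impossible for
`0 < |v₂| < |v₁|`.
-/

variable {α : Type*}

/-- `x` occurs in `w` beginning at (1-indexed) position `i`. -/
def OccursAt (x w : List α) (i : ℕ) : Prop :=
  ∃ u v : List α, w = u ++ x ++ v ∧ u.length + 1 = i

/-- The last (rightmost) occurrence of `x` in `w` begins at position `i`. -/
def LastOccAt (x w : List α) (i : ℕ) : Prop :=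
  OccursAt x w i ∧ ∀ j, OccursAt x w j → j ≤ i

/-- `e`-fold concatenation of the word `v`. -/
def listPow (v : List α) (e : ℕ) : List α :=
  (List.replicate e v).flatten

/-- A word is primitive if it is nonempty and not a nontrivial power. -/
def Primitive (w : List α) : Prop :=
  w ≠ [] ∧ ∀ (v : List α) (e : ℕ), 2 ≤ e → w ≠ listPow v e

/-- The set of distinct squares occurring in `w`. -/
def squareSet (w : List α) : Set (List α) :=
  {x | ∃ u : List α, u ≠ [] ∧ x = u ++ u ∧ x <:+: w}

/-- The number of distinct squares whose last occurrence in `w` begins at position `i`. -/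
noncomputable def sCount (w : List α) (i : ℕ) : ℕ :=
  {u : List α | u ≠ [] ∧ LastOccAt (u ++ u) w i}.ncard

open List

lemma listPow_add (v : List α) (a b : ℕ) : listPow v (a + b) = listPow v a ++ listPow v b := by
  simp only [listPow, replicate_add, flatten_append]

lemma listPow_one (v : List α) : listPow v 1 = v := by
  simp [listPow]

lemma length_listPow (v : List α) (n : ℕ) : (listPow v n).length = n * v.length := by
  induction n with
  | zero => simp [listPow]
  | succ n ih => rw [listPow_add, length_append, ih, listPow_one, Nat.succ_mul]

lemma hasPeriod_listPow (v : List α) (n : ℕ) : (listPow v n).HasPeriod v.length := by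
  cases n with
  | zero => simp [HasPeriod, listPow]
  | succ n =>
    have htake : (listPow v (n + 1)).take v.length = v := by
      rw [add_comm, listPow_add, listPow_one, take_left]
    rw [HasPeriod, htake]
    have hshift : v ++ listPow v (n + 1) = listPow v (n + 1) ++ v := by
      simpa only [listPow_add, listPow_one] using congrArg (listPow v) (add_comm 1 (n + 1))
    exact hshift ▸ prefix_append _ _

lemma List.HasPeriod.prefix_listPow_take_append {w : List α} {d : ℕ} (hw : w.HasPeriod d)
    (n : ℕ) : w <+: listPow (w.take d) n ++ w := by
  induction n with
  | zero => exact prefix_refl w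
  | succ n ih =>
    rw [add_comm, listPow_add, listPow_one, append_assoc]
    exact hw.trans ((prefix_append_right_inj _).2 ih)

lemma List.HasPeriod.eq_listPow_take {w : List α} {d : ℕ} (hw : w.HasPeriod d)
    (hd : d ∣ w.length) : w = listPow (w.take d) (w.length / d) := by
  rcases Nat.eq_zero_or_pos d with rfl | hd0
  · simp_all [listPow]
  have hlen : (listPow (w.take d) (w.length / d)).length = w.length := by
    rcases Nat.eq_zero_or_pos w.length with h0 | hpos
    · simp [h0, listPow]
    rw [length_listPow, length_take, min_eq_left (Nat.le_of_dvd hpos hd), Nat.div_mul_cancel hd]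
  exact (prefix_of_prefix_length_le (hw.prefix_listPow_take_append _) (prefix_append _ _)
    hlen.ge).eq_of_length hlen.symm

lemma Primitive.eq_length_of_hasPeriod {w : List α} {d : ℕ} (hw : Primitive w)
    (hper : w.HasPeriod d) (hd : d ∣ w.length) : d = w.length := by
  have hpos : 0 < w.length := length_pos_iff.2 hw.1
  have hd0 : 0 < d := Nat.pos_of_dvd_of_pos hd hpos
  have hpow := hper.eq_listPow_take hd
  obtain ⟨k, hk⟩ := hd
  rw [hk, Nat.mul_div_cancel_left k hd0] at hpow
  by_contra hne
  have hk2 : 2 ≤ k := by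
    rcases k with _ | _ | k
    · omega
    · exact absurd (hk.trans (mul_one d)).symm hne
    · omega
  exact hw.2 _ k hk2 hpow

lemma Primitive.not_hasPeriod_listPow_append_prefix {v x : List α} {m q : ℕ} (hv : Primitive v)
    (hxv : x <+: v) (hx : ¬ v.length ∣ x.length) (hm : 2 ≤ m)
    (hq : (listPow v m ++ x).HasPeriod q) (hqdvd : q ∣ (listPow v m ++ x).length)
    (hq2 : 2 * q ≤ (listPow v m ++ x).length) : False := by
  have hlen : (listPow v m ++ x).length = m * v.length + x.length := by
    rw [length_append, length_listPow]
  have hvW : v <+: listPow v m ++ x := by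
    rw [show m = 1 + (m - 1) by omega, listPow_add, listPow_one, append_assoc]
    exact prefix_append _ _
  have hWv : listPow v m ++ x <+: listPow v (m + 1) := by
    rw [listPow_add, listPow_one]
    exact (prefix_append_right_inj _).2 hxv
  have hp : (listPow v m ++ x).HasPeriod v.length := (hasPeriod_listPow v _).infix hWv.isInfix
  have hg : (listPow v m ++ x).HasPeriod (v.length.gcd q) := by
    refine hp.gcd hq ?_
    have := Nat.mul_le_mul_right v.length hm
    omega
  have hgv : v.length.gcd q = v.length :=
    hv.eq_length_of_hasPeriod (hg.infix hvW.isInfix) (Nat.gcd_dvd_left _ _)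
  have hdvd : v.length ∣ m * v.length + x.length :=
    hlen ▸ (hgv ▸ Nat.gcd_dvd_right v.length q).trans hqdvd
  exact hx ((Nat.dvd_add_right (dvd_mul_left _ _)).1 hdvd)

/-- If v₁ is primitive and v₂ a nonempty proper prefix of v₁, then
    U = v₁^{e₁} v₂ v₁^{e₂} is primitive. -/
theorem stmt2 {α : Type*} (v1 v2 : List α) (e1 e2 : ℕ)
    (hprim : Primitive v1) (hne : v2 ≠ []) (hpre : v2 <+: v1) (hproper : v2 ≠ v1)
    (he2 : 1 ≤ e2) (he12 : e2 ≤ e1) :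
    Primitive (listPow v1 e1 ++ v2 ++ listPow v1 e2) := by
  refine ⟨fun h => hne (append_eq_nil_iff.1 (append_eq_nil_iff.1 h).1).2, ?_⟩
  rintro z e he hU
  have hlt : v2.length < v1.length :=
    lt_of_le_of_ne hpre.length_le fun h => hproper (hpre.eq_of_length h)
  have hfactor : listPow v1 (e2 + e1) ++ v2 <:+: listPow z (e + e) := by
    rw [listPow_add, listPow_add, ← hU]
    exact ⟨listPow v1 e1 ++ v2, listPow v1 e2, by simp⟩
  have hlen : (listPow v1 (e2 + e1) ++ v2).length = e * z.length := by
    rw [← length_listPow, ← hU]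
    simp only [length_append, length_listPow]
    ring
  refine hprim.not_hasPeriod_listPow_append_prefix hpre ?_ (by omega)
    ((hasPeriod_listPow z _).infix hfactor) (hlen ▸ dvd_mul_left _ _)
    (hlen ▸ Nat.mul_le_mul_right _ he)
  exact fun h => hne (length_eq_zero_iff.1 (Nat.eq_zero_of_dvd_of_lt h hlt))
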